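/- Let k1, k2, N be positive integers, p a prime, n2 > 1 odd, and n1, n2 >= N. Then sum_{i=0}^{φ(p^N)-1} B^{★,(-k1,-k2)}_{n1+i, n2-1} ≡ 0 (mod p^N). -/

import Mathlib

/-- Stirling numbers of the second kind. -/
def S2 : ℕ → ℕ → ℕ
  | 0, 0 => 1
  | 0, _ + 1 => 0
  | _ + 1, 0 => 0
  | n + 1, m + 1 => S2 n m + (m + 1) * S2 n (m + 1)
/-- Double-indexed poly-Bernoulli number with negative upper indices
`B_{ℓ1,ℓ2}^{(-k1,-k2)}`, via the explicit formula of Theorem 2.1. -/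
def B2negA (l1 l2 k1 k2 : ℕ) : ℤ :=
  ∑ m1 ∈ Finset.range (l1 + l2 + 1), ∑ m2 ∈ Finset.range (l1 + l2 + 1),
    (-1 : ℤ) ^ (m1 + m2 + l1 + l2) * (Nat.factorial m1 : ℤ) * (Nat.factorial m2 : ℤ) *
      ((m1 : ℤ) + 1) ^ k1 * ((m1 : ℤ) + (m2 : ℤ) + 2) ^ k2 *
      ∑ n ∈ Finset.range (l1 + l2 + 1),
        (S2 n m1 : ℤ) * (S2 (l1 + l2 - n) m2 : ℤ) *
          (if l1 ≤ n then (Nat.choose l2 (n - l1) : ℤ) else 0)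

/-! The key fact is the duality `B2negA l1 l2 k1 k2 = B2negA k1 k2 l1 l2`. Expanding
`(m1 + 1) ^ k1 * (m1 + m2 + 2) ^ k2` in descending factorials of `m1` and `m2` and inverting the
alternating Stirling sums of the explicit formula turns `B2negA l1 l2 k1 k2` into the symmetric
expression `∑ (i1! i2!)² T(l1, l2; i1, i2) T(k1, k2; i1, i2)`, `T` being those expansion
coefficients.

After dualising, `B^{(-k1,-k2)}_{n1+i, n2-1}` is a combination of the powers `(m1 + 1) ^ (n1 + i)`
with coefficients divisible by `m1!`. The `m1 = 0` term vanishes as `k1 > 0`, and for `m1 ≥ 1`,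
`m1 * ∑_{i < φ(p^N)} (m1 + 1) ^ (n1 + i) = (m1 + 1) ^ n1 * ((m1 + 1) ^ φ(p^N) - 1)` is divisible
by `p ^ N`: by Euler's theorem if `p ∤ m1 + 1`, and because `N ≤ n1` otherwise. -/

open Finset Nat

theorem S2_eq_stirlingSecond : S2 = stirlingSecond := by
  funext n k
  induction n generalizing k with
  | zero => cases k <;> rfl
  | succ n ih =>
    cases k with
    | zero => rfl
    | succ k => simp only [S2, stirlingSecond_succ_succ, ih]; ring

theorem sum_range_succ_shift {M : Type*} [AddCommMonoid M] (f : ℕ → M) {n : ℕ} (h0 : f 0 = 0)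
    (hn : f (n + 1) = 0) : ∑ i ∈ range (n + 1), f (i + 1) = ∑ i ∈ range (n + 1), f i := by
  rw [sum_range_succ, hn, sum_range_succ', h0]

theorem add_one_pow_eq_sum_descFactorial_mul_stirlingSecond {m M : ℕ} (hm : m ≤ M) (k : ℕ) :
    (m + 1) ^ k = ∑ i ∈ range (M + 1), m.descFactorial i * stirlingSecond (k + 1) (i + 1) := by
  induction k with
  | zero =>
    rw [sum_eq_single_of_mem 0 (by simp) fun i _ hi => by
      rw [stirlingSecond_eq_zero_of_lt (by omega), mul_zero]]
    simp [stirlingSecond_self]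
  | succ k ih =>
    have hshift :
        ∑ i ∈ range (M + 1), (m - i) * m.descFactorial i * stirlingSecond (k + 1) (i + 1)
          = ∑ i ∈ range (M + 1), m.descFactorial i * stirlingSecond (k + 1) i := by
      rw [← sum_range_succ_shift (fun i => m.descFactorial i * stirlingSecond (k + 1) i) (by simp)
        (by rw [descFactorial_eq_zero_iff_lt.2 (by omega : m < M + 1), zero_mul])]
      exact sum_congr rfl fun i _ => by rw [descFactorial_succ]
    have hfactor (i : ℕ) :
        (m + 1) * m.descFactorial i = (i + 1 + (m - i)) * m.descFactorial i := by
      rcases le_or_gt i m with h | h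
      · congr 1; omega
      · simp [descFactorial_eq_zero_iff_lt.2 h]
    calc (m + 1) ^ (k + 1)
        = ∑ i ∈ range (M + 1),
            (i + 1 + (m - i)) * m.descFactorial i * stirlingSecond (k + 1) (i + 1) := by
          rw [_root_.pow_succ', ih, mul_sum]; simp only [← mul_assoc, hfactor]
      _ = ∑ i ∈ range (M + 1), (i + 1) * m.descFactorial i * stirlingSecond (k + 1) (i + 1)
          + ∑ i ∈ range (M + 1),
              (m - i) * m.descFactorial i * stirlingSecond (k + 1) (i + 1) := by
          rw [← sum_add_distrib]; exact sum_congr rfl fun i _ => by ring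
      _ = ∑ i ∈ range (M + 1), m.descFactorial i * stirlingSecond (k + 1 + 1) (i + 1) := by
          rw [hshift, ← sum_add_distrib]
          exact sum_congr rfl fun i _ => by rw [stirlingSecond_succ_succ (k + 1) i]; ring

/-- The coefficient of `x.descFactorial i1 * y.descFactorial i2` in
`(x + 1) ^ k1 * (x + y + 2) ^ k2`. -/
def descFactorialCoeff (k1 k2 i1 i2 : ℕ) : ℕ :=
  ∑ s ∈ range (k2 + 1),
    k2.choose s * stirlingSecond (k1 + s + 1) (i1 + 1) * stirlingSecond (k2 - s + 1) (i2 + 1)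

theorem add_one_pow_mul_add_two_pow_eq_sum {m1 m2 M : ℕ} (h1 : m1 ≤ M) (h2 : m2 ≤ M)
    (k1 k2 : ℕ) :
    (m1 + 1) ^ k1 * (m1 + m2 + 2) ^ k2 = ∑ i1 ∈ range (M + 1), ∑ i2 ∈ range (M + 1),
      m1.descFactorial i1 * m2.descFactorial i2 * descFactorialCoeff k1 k2 i1 i2 := by
  calc (m1 + 1) ^ k1 * (m1 + m2 + 2) ^ k2
      = ∑ s ∈ range (k2 + 1), k2.choose s * ((m1 + 1) ^ (k1 + s) * (m2 + 1) ^ (k2 - s)) := by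
        rw [show m1 + m2 + 2 = (m1 + 1) + (m2 + 1) by ring, add_pow _ _ k2, mul_sum]
        exact sum_congr rfl fun s _ => by rw [Nat.cast_id]; ring
    _ = ∑ s ∈ range (k2 + 1), k2.choose s * ∑ i1 ∈ range (M + 1), ∑ i2 ∈ range (M + 1),
          m1.descFactorial i1 * stirlingSecond (k1 + s + 1) (i1 + 1) *
            (m2.descFactorial i2 * stirlingSecond (k2 - s + 1) (i2 + 1)) := by
        simp_rw [add_one_pow_eq_sum_descFactorial_mul_stirlingSecond h1,
          add_one_pow_eq_sum_descFactorial_mul_stirlingSecond h2, sum_mul_sum]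
    _ = _ := by
        simp_rw [descFactorialCoeff, mul_sum]
        rw [sum_comm]; refine sum_congr rfl fun i1 _ => ?_
        rw [sum_comm]; exact sum_congr rfl fun i2 _ => sum_congr rfl fun s _ => by ring

theorem add_one_mul_choose_succ_succ (m j : ℕ) :
    (m + 1) * (m + 1).choose (j + 1)
      = m * m.choose (j + 1) + (j + 2) * m.choose (j + 1) + (j + 1) * m.choose j := by
  have h := add_one_mul_choose_eq m j
  rw [choose_succ_succ'] at h ⊢
  linarith

theorem sum_alternating_factorial_choose_stirlingSecond_succ {a M : ℕ} (ha : a < M) (i : ℕ) :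
    ∑ m ∈ range (M + 1), (-1 : ℤ) ^ (a + 1 + m) * m ! * m.choose i * stirlingSecond (a + 1) m
      = ∑ m ∈ range (M + 1), (-1 : ℤ) ^ (a + m) * m ! *
          ((m + 1) * (m + 1).choose i - m * m.choose i) * stirlingSecond a m := by
  set C : ℕ → ℤ := fun m => (-1 : ℤ) ^ (a + m) * m ! * m * m.choose i * stirlingSecond a m
  have hC : ∑ m ∈ range (M + 1), C (m + 1) = ∑ m ∈ range (M + 1), C m :=
    sum_range_succ_shift C (by simp [C])
      (by simp [C, stirlingSecond_eq_zero_of_lt (by omega : a < M + 1)])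
  rw [← sum_range_succ_shift _ (by simp)
    (by simp [stirlingSecond_eq_zero_of_lt (by omega : a + 1 < M + 1)])]
  calc _ = ∑ m ∈ range (M + 1),
          ((-1 : ℤ) ^ (a + m) * (m + 1)! * (m + 1).choose i * stirlingSecond a m - C (m + 1)) :=
        sum_congr rfl fun m _ => by
          simp only [C, stirlingSecond_succ_succ a m]; push_cast; ring
    _ = ∑ m ∈ range (M + 1),
            (-1 : ℤ) ^ (a + m) * (m + 1)! * (m + 1).choose i * stirlingSecond a m
          - ∑ m ∈ range (M + 1), C m := by rw [sum_sub_distrib, hC]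
    _ = _ := by
        rw [← sum_sub_distrib]
        exact sum_congr rfl fun m _ => by simp only [C, factorial_succ]; push_cast; ring

theorem sum_alternating_factorial_choose_stirlingSecond {a M : ℕ} (ha : a ≤ M) (i : ℕ) :
    ∑ m ∈ range (M + 1), (-1 : ℤ) ^ (a + m) * m ! * m.choose i * stirlingSecond a m
      = i ! * stirlingSecond (a + 1) (i + 1) := by
  induction a generalizing i with
  | zero =>
    rw [sum_eq_single_of_mem 0 (by simp) fun m _ hm => by
      rw [stirlingSecond_eq_zero_of_lt (by omega)]; simp]
    cases i <;> simp [stirlingSecond_self, stirlingSecond_eq_zero_of_lt]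
  | succ a ih =>
    replace ih := ih (by omega)
    rw [sum_alternating_factorial_choose_stirlingSecond_succ (by omega)]
    cases i with
    | zero =>
      calc _ = ∑ m ∈ range (M + 1),
              (-1 : ℤ) ^ (a + m) * m ! * m.choose 0 * stirlingSecond a m :=
            sum_congr rfl fun m _ => by simp
        _ = _ := by rw [ih 0, stirlingSecond_succ_succ (a + 1) 0]; simp
    | succ j =>
      calc _ = (j + 2) * ∑ m ∈ range (M + 1),
                (-1 : ℤ) ^ (a + m) * m ! * m.choose (j + 1) * stirlingSecond a m
            + (j + 1) * ∑ m ∈ range (M + 1),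
                (-1 : ℤ) ^ (a + m) * m ! * m.choose j * stirlingSecond a m := by
            rw [mul_sum, mul_sum, ← sum_add_distrib]
            refine sum_congr rfl fun m _ => ?_
            have h : ((m + 1) * (m + 1).choose (j + 1) : ℤ)
                = m * m.choose (j + 1) + (j + 2) * m.choose (j + 1) + (j + 1) * m.choose j := by
              exact_mod_cast add_one_mul_choose_succ_succ m j
            linear_combination ((-1 : ℤ) ^ (a + m) * m ! * stirlingSecond a m) * h
        _ = _ := by
            rw [ih, ih, stirlingSecond_succ_succ (a + 1) (j + 1), factorial_succ]
            push_cast; ring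

def stirlingSecondConv (l1 l2 m1 m2 : ℕ) : ℕ :=
  ∑ t ∈ range (l2 + 1), l2.choose t * stirlingSecond (l1 + t) m1 * stirlingSecond (l2 - t) m2

theorem sum_neg_one_pow_mul_descFactorial_mul_stirlingSecondConv (l1 l2 i1 i2 : ℕ) :
    ∑ m1 ∈ range (l1 + l2 + 1), ∑ m2 ∈ range (l1 + l2 + 1),
      (-1 : ℤ) ^ (m1 + m2 + l1 + l2) * m1 ! * m2 ! * m1.descFactorial i1 * m2.descFactorial i2 *
        stirlingSecondConv l1 l2 m1 m2
      = (i1 ! * i2 ! : ℤ) ^ 2 * descFactorialCoeff l1 l2 i1 i2 := by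
  calc _ = ∑ t ∈ range (l2 + 1), ∑ m1 ∈ range (l1 + l2 + 1), ∑ m2 ∈ range (l1 + l2 + 1),
          (i1 ! * i2 ! * l2.choose t : ℤ) *
            ((-1 : ℤ) ^ (l1 + t + m1) * m1 ! * m1.choose i1 * stirlingSecond (l1 + t) m1) *
            ((-1 : ℤ) ^ (l2 - t + m2) * m2 ! * m2.choose i2 * stirlingSecond (l2 - t) m2) := by
        simp only [stirlingSecondConv, cast_sum, mul_sum]
        rw [(sum_congr rfl fun m1 _ => sum_comm).trans sum_comm]
        refine sum_congr rfl fun t ht => sum_congr rfl fun m1 _ => sum_congr rfl fun m2 _ => ?_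
        have hsign :
            (-1 : ℤ) ^ (m1 + m2 + l1 + l2) = (-1) ^ (l1 + t + m1) * (-1) ^ (l2 - t + m2) := by
          rw [← pow_add]; congr 1; simp only [mem_range] at ht; omega
        rw [hsign, descFactorial_eq_factorial_mul_choose, descFactorial_eq_factorial_mul_choose]
        push_cast; ring
    _ = ∑ t ∈ range (l2 + 1), (i1 ! * i2 ! * l2.choose t : ℤ) *
          (i1 ! * stirlingSecond (l1 + t + 1) (i1 + 1)) *
            (i2 ! * stirlingSecond (l2 - t + 1) (i2 + 1)) := by
        refine sum_congr rfl fun t ht => ?_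
        simp only [mem_range] at ht
        rw [← sum_alternating_factorial_choose_stirlingSecond (by omega : l1 + t ≤ l1 + l2),
          ← sum_alternating_factorial_choose_stirlingSecond (by omega : l2 - t ≤ l1 + l2)]
        simp only [mul_sum, sum_mul]
        exact sum_comm
    _ = _ := by
        simp only [descFactorialCoeff, cast_sum, mul_sum]
        push_cast
        exact sum_congr rfl fun t _ => by ring

theorem B2negA_eq_sum (l1 l2 k1 k2 : ℕ) :
    B2negA l1 l2 k1 k2 = ∑ m1 ∈ range (l1 + l2 + 1), ∑ m2 ∈ range (l1 + l2 + 1),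
      (-1 : ℤ) ^ (m1 + m2 + l1 + l2) * m1 ! * m2 ! * ((m1 : ℤ) + 1) ^ k1 *
        ((m1 : ℤ) + m2 + 2) ^ k2 * stirlingSecondConv l1 l2 m1 m2 := by
  have hconv (m1 m2 : ℕ) : ∑ n ∈ range (l1 + l2 + 1), (stirlingSecond n m1 : ℤ) *
      stirlingSecond (l1 + l2 - n) m2 * (if l1 ≤ n then (l2.choose (n - l1) : ℤ) else 0)
        = stirlingSecondConv l1 l2 m1 m2 := by
    rw [show l1 + l2 + 1 = l1 + (l2 + 1) by ring, sum_range_add,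
      sum_eq_zero fun n hn => by simp [not_le.2 (mem_range.1 hn)], zero_add, stirlingSecondConv]
    push_cast
    refine sum_congr rfl fun t ht => ?_
    rw [if_pos (Nat.le_add_right l1 t), add_tsub_cancel_left,
      show l1 + l2 - (l1 + t) = l2 - t by omega]
    ring
  simp only [B2negA, S2_eq_stirlingSecond, hconv]

theorem B2negA_eq_sum_descFactorialCoeff {l1 l2 M : ℕ} (hM : l1 + l2 ≤ M) (k1 k2 : ℕ) :
    B2negA l1 l2 k1 k2 = ∑ i1 ∈ range (M + 1), ∑ i2 ∈ range (M + 1),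
      (i1 ! * i2 ! : ℤ) ^ 2 * descFactorialCoeff l1 l2 i1 i2 *
        descFactorialCoeff k1 k2 i1 i2 := by
  rw [B2negA_eq_sum]
  calc _ = ∑ m1 ∈ range (l1 + l2 + 1), ∑ m2 ∈ range (l1 + l2 + 1),
        ∑ i1 ∈ range (M + 1), ∑ i2 ∈ range (M + 1), (descFactorialCoeff k1 k2 i1 i2 : ℤ) *
          ((-1 : ℤ) ^ (m1 + m2 + l1 + l2) * m1 ! * m2 ! * m1.descFactorial i1 *
            m2.descFactorial i2 * stirlingSecondConv l1 l2 m1 m2) := by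
        refine sum_congr rfl fun m1 hm1 => sum_congr rfl fun m2 hm2 => ?_
        simp only [mem_range] at hm1 hm2
        have hpow : ((m1 : ℤ) + 1) ^ k1 * ((m1 : ℤ) + m2 + 2) ^ k2
            = ∑ i1 ∈ range (M + 1), ∑ i2 ∈ range (M + 1),
                (m1.descFactorial i1 * m2.descFactorial i2 * descFactorialCoeff k1 k2 i1 i2 :
                  ℤ) := by
          exact_mod_cast
            add_one_pow_mul_add_two_pow_eq_sum (by omega : m1 ≤ M) (by omega : m2 ≤ M) k1 k2
        calc _ = ((-1 : ℤ) ^ (m1 + m2 + l1 + l2) * m1 ! * m2 ! * stirlingSecondConv l1 l2 m1 m2) *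
              (((m1 : ℤ) + 1) ^ k1 * ((m1 : ℤ) + m2 + 2) ^ k2) := by ring
          _ = _ := by
            simp only [hpow, mul_sum]
            exact sum_congr rfl fun i1 _ => sum_congr rfl fun i2 _ => by ring
    _ = ∑ i1 ∈ range (M + 1), ∑ i2 ∈ range (M + 1), (descFactorialCoeff k1 k2 i1 i2 : ℤ) *
          ∑ m1 ∈ range (l1 + l2 + 1), ∑ m2 ∈ range (l1 + l2 + 1),
            (-1 : ℤ) ^ (m1 + m2 + l1 + l2) * m1 ! * m2 ! * m1.descFactorial i1 *
              m2.descFactorial i2 * stirlingSecondConv l1 l2 m1 m2 := by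
        simp only [mul_sum]
        exact (sum_congr rfl fun _ _ => sum_comm).trans <| sum_comm.trans <|
          sum_congr rfl fun _ _ => (sum_congr rfl fun _ _ => sum_comm).trans sum_comm
    _ = _ := by
        simp only [sum_neg_one_pow_mul_descFactorial_mul_stirlingSecondConv]
        exact sum_congr rfl fun i1 _ => sum_congr rfl fun i2 _ => by ring

theorem B2negA_comm (l1 l2 k1 k2 : ℕ) : B2negA l1 l2 k1 k2 = B2negA k1 k2 l1 l2 := by
  rw [B2negA_eq_sum_descFactorialCoeff (by omega : l1 + l2 ≤ l1 + l2 + k1 + k2),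
    B2negA_eq_sum_descFactorialCoeff (by omega : k1 + k2 ≤ l1 + l2 + k1 + k2)]
  exact sum_congr rfl fun i1 _ => sum_congr rfl fun i2 _ => by ring

theorem prime_pow_dvd_sub_one_mul_sum_pow_totient {p : ℕ} (hp : p.Prime) (x : ℕ) {N n : ℕ}
    (hn : N ≤ n) :
    (p : ℤ) ^ N ∣ ((x : ℤ) - 1) * ∑ i ∈ range (φ (p ^ N)), (x : ℤ) ^ (n + i) := by
  have hgeom : ((x : ℤ) - 1) * ∑ i ∈ range (φ (p ^ N)), (x : ℤ) ^ (n + i)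
      = (x : ℤ) ^ n * ((x : ℤ) ^ φ (p ^ N) - 1) := by
    simp_rw [pow_add, ← mul_sum, ← geom_sum_mul]; ring
  rw [hgeom]
  by_cases hpx : p ∣ x
  · have hxn : (p : ℤ) ^ N ∣ (x : ℤ) ^ n :=
      (pow_dvd_pow_of_dvd (Int.natCast_dvd_natCast.2 hpx) N).trans (pow_dvd_pow _ hn)
    exact hxn.mul_right _
  · have hcop : x.Coprime (p ^ N) := Nat.Coprime.pow_right N (hp.coprime_iff_not_dvd.2 hpx).symm
    have heuler := (Nat.ModEq.pow_totient hcop).symm.dvd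
    push_cast at heuler
    exact heuler.mul_left _

theorem prime_pow_dvd_sum_B2negA_totient {k1 : ℕ} (hk1 : 0 < k1) (k2 : ℕ) {p : ℕ}
    (hp : p.Prime) {N n1 : ℕ} (hn1 : N ≤ n1) (l2 : ℕ) :
    (p : ℤ) ^ N ∣ ∑ i ∈ range (φ (p ^ N)), B2negA k1 k2 (n1 + i) l2 := by
  simp only [B2negA_eq_sum]
  rw [sum_comm]; refine dvd_sum fun m1 _ => ?_
  rw [sum_comm]; refine dvd_sum fun m2 _ => ?_
  rcases m1 with _ | m
  · have hconv : stirlingSecondConv k1 k2 0 m2 = 0 := sum_eq_zero fun t _ => by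
      rw [show k1 + t = k1 + t - 1 + 1 by omega, stirlingSecond_succ_zero, mul_zero, zero_mul]
    simp [hconv]
  · refine (dvd_mul_of_dvd_right (prime_pow_dvd_sub_one_mul_sum_pow_totient hp (m + 2) hn1)
      ((-1 : ℤ) ^ (m + 1 + m2 + k1 + k2) * m ! * m2 ! * ((m : ℤ) + 1 + m2 + 2) ^ l2 *
        stirlingSecondConv k1 k2 (m + 1) m2)).trans (dvd_of_eq ?_)
    rw [mul_sum, mul_sum]
    exact sum_congr rfl fun i _ => by push_cast [factorial_succ]; ring

theorem starDoublePolyBernoulli_sum_vanish_general (k1 k2 N : ℕ)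
    (hk1 : 0 < k1) (p : ℕ) (hp : p.Prime)
    (Bstar : ℕ → ℕ → ℤ)
    (hBstar : ∀ a b : ℕ, Odd b → 1 < b → Bstar a (b - 1) = B2negA a (b - 1) k1 k2)
    (n1 n2 : ℕ) (hodd : Odd n2) (hn2' : 1 < n2) (hn1 : N ≤ n1) :
    (∑ i ∈ Finset.range (Nat.totient (p ^ N)), Bstar (n1 + i) (n2 - 1)) ≡ 0
      [ZMOD (p : ℤ) ^ N] := by
  have hdual (i : ℕ) : Bstar (n1 + i) (n2 - 1) = B2negA k1 k2 (n1 + i) (n2 - 1) := by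
    rw [hBstar _ n2 hodd hn2', B2negA_comm]
  simp only [hdual]
  exact Int.modEq_zero_iff_dvd.2 (prime_pow_dvd_sum_B2negA_totient hk1 k2 hp hn1 (n2 - 1))

/-- Vanishing of totient-length sums of star double-indexed poly-Bernoulli
numbers with odd second index. -/
theorem starDoublePolyBernoulli_sum_vanish (k1 k2 N : ℕ)
    (hk1 : 0 < k1) (hk2 : 0 < k2) (hN : 0 < N) (p : ℕ) (hp : p.Prime)
    (Bstar : ℕ → ℕ → ℤ)
    (hBstar : ∀ a b : ℕ, Odd b → 1 < b → Bstar a (b - 1) = B2negA a (b - 1) k1 k2)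
    (n1 n2 : ℕ) (hodd : Odd n2) (hn2' : 1 < n2) (hn1 : N ≤ n1) (hn2 : N ≤ n2) :
    (∑ i ∈ Finset.range (Nat.totient (p ^ N)), Bstar (n1 + i) (n2 - 1)) ≡ 0
      [ZMOD (p : ℤ) ^ N] :=
  starDoublePolyBernoulli_sum_vanish_general k1 k2 N hk1 p hp Bstar hBstar n1 n2 hodd hn2' hn1
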